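/- Triviality of adhesive solutions with zero data: Let L, ρ, μ, T > 0 and let Φ satisfy assumption (A1), with the restriction of Φ to [−1,1] continuously differentiable up to the endpoints. Let u : [0,T]×[0,L] → ℝ be smooth (C² in t and C⁴ in x, with continuous mixed derivative ∂_t∂²ₓu) with |u(t,x)| ≤ 1 for all (t,x), satisfying ρ∂²_t u = −μ∂⁴ₓu − Φ'(u) on [0,T]×(0,L) (where Φ' denotes the derivative of Φ restricted to [−1,1]), the boundary conditions ∂²ₓu(t,0) = ∂²ₓu(t,L) = ∂³ₓu(t,0) = ∂³ₓu(t,L) = 0 for all t, and the zero initial conditions u(0,·) = 0 and ∂_t u(0,·) = 0. Then u ≡ 0 on [0,T]×[0,L]. -/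

import Mathlib

/-!
Energy method. For `s ∈ [0,T]` the energy
`E(s) = ∫₀ᴸ (ρ/2 (∂ₜu)² + μ/2 (∂ₓ²u)² + Φ(u) - Φ(0))`
vanishes at `s = 0`, and by the equation its time derivative is `μ ∫₀ᴸ (∂ₓ²u ∂ₜ∂ₓ²u - ∂ₜu ∂ₓ⁴u)`.
Only `∂ₜ∂ₓ²u` is known to exist, so this is shown to vanish indirectly: two integrations by
parts with the free-end conditions give `∫ u(τ) ∂ₓ⁴u(t) = ∫ ∂ₓ²u(τ) ∂ₓ²u(t)`, and differentiating in `τ` at `τ = t`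
gives `∫ ∂ₜu ∂ₓ⁴u = ∫ ∂ₜ∂ₓ²u ∂ₓ²u`. All terms of `E` are nonnegative because `Φ` is minimal
at `0` on `[-1,1]`, so `∂ₜu ≡ 0` and `u ≡ u(0) = 0`.
-/

open MeasureTheory Filter Set intervalIntegral Real

/-- Assumption (A1) on the adhesive potential `Φ` with constant `κ`. -/
structure AdhesivePotential (Φ : ℝ → ℝ) (κ : ℝ) : Prop where
  continuous : Continuous Φ
  smooth : ContDiffOn ℝ 2 Φ ({1, -1} : Set ℝ)ᶜ
  nonneg : ∀ s, 0 ≤ Φ s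
  const_left : ∀ s ≤ (-1 : ℝ), Φ s = Φ (-1)
  const_right : ∀ s ≥ (1 : ℝ), Φ s = Φ 1
  convexOn : ConvexOn ℝ (Set.Icc (-1 : ℝ) 1) Φ
  strictAntiOn : StrictAntiOn Φ (Set.Icc (-1 : ℝ) 0)
  strictMonoOn : StrictMonoOn Φ (Set.Icc (0 : ℝ) 1)
  kappa_pos : 0 < κ
  quad_lower : ∀ s ∈ Set.Icc (-1 : ℝ) 1, κ * s ^ 2 ≤ Φ s

/-- The subdifferential of the (discontinuous) adhesive force `Φ'`:
`∂Φ'(s) = {Φ'(s)}` if `|s| < 1`, `{0}` if `|s| > 1`, `[0, Φ'(1⁻)]` if `s = 1` and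
`[Φ'(-1⁺), 0]` if `s = -1`.  Since `Φ` is convex on `[-1,1]`, its derivative is monotone
there, so the one-sided limits `Φ'(1⁻)` and `Φ'(-1⁺)` coincide with the supremum and the
infimum of `Φ'` over `(-1,1)`, respectively. -/
noncomputable def subdiffForce (Φ : ℝ → ℝ) (s : ℝ) : Set ℝ :=
  if |s| < 1 then {deriv Φ s}
  else if s = 1 then Set.Icc 0 (sSup (deriv Φ '' Set.Ioo (-1 : ℝ) 1))
  else if s = -1 then Set.Icc (sInf (deriv Φ '' Set.Ioo (-1 : ℝ) 1)) 0
  else {0}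

open Function Topology

theorem AdhesivePotential.apply_zero_le {Φ : ℝ → ℝ} {κ : ℝ} (hΦ : AdhesivePotential Φ κ)
    {s : ℝ} (hs : s ∈ Icc (-1 : ℝ) 1) : Φ 0 ≤ Φ s := by
  rcases lt_trichotomy s 0 with hneg | rfl | hpos
  · exact (hΦ.strictAntiOn ⟨hs.1, hneg.le⟩ ⟨by norm_num, le_rfl⟩ hneg).le
  · rfl
  · exact (hΦ.strictMonoOn ⟨le_rfl, zero_le_one⟩ ⟨hpos.le, hs.2⟩ hpos).le

theorem eqOn_zero_of_hasDerivAt_of_eqOn_zero {f f' : ℝ → ℝ} {a b : ℝ} (hab : a < b)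
    (hf : ∀ x ∈ Icc a b, HasDerivAt f (f' x) x) (h : EqOn f 0 (Icc a b)) :
    EqOn f' 0 (Icc a b) := by
  intro x hx
  have hzero : HasDerivWithinAt f 0 (Icc a b) x :=
    (hasDerivWithinAt_const x _ 0).congr h (h hx)
  exact (uniqueDiffOn_Icc hab x hx).eq_deriv _ (hf x hx).hasDerivWithinAt hzero

theorem eqOn_zero_of_integral_mul_sq_add_eq_zero {f g : ℝ → ℝ} {a b c : ℝ} (hab : a < b)
    (hc : 0 < c) (hf : ContinuousOn f (Icc a b)) (hg : ContinuousOn g (Icc a b))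
    (hg₀ : ∀ x ∈ Icc a b, 0 ≤ g x) (h : ∫ x in a..b, (c * f x ^ 2 + g x) = 0) :
    EqOn f 0 (Icc a b) := by
  intro x hx
  by_contra hfx
  have hpos : (∫ _ in a..b, (0 : ℝ)) < ∫ x in a..b, (c * f x ^ 2 + g x) :=
    integral_lt_integral_of_continuousOn_of_le_of_exists_lt hab continuousOn_const
      (continuousOn_const.mul (hf.pow 2) |>.add hg)
      (fun y hy => by have := hg₀ y (Ioc_subset_Icc_self hy); positivity)
      ⟨x, hx, by have := hg₀ x hx; have : f x ≠ 0 := hfx; positivity⟩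
  simp [h] at hpos

theorem integral_mul_eq_integral_mul_of_free_ends {f f₁ f₂ g₂ g₃ g₄ : ℝ → ℝ} {a b : ℝ}
    (hf : ∀ x ∈ uIcc a b, HasDerivAt f (f₁ x) x) (hf₁ : ∀ x ∈ uIcc a b, HasDerivAt f₁ (f₂ x) x)
    (hg₂ : ∀ x ∈ uIcc a b, HasDerivAt g₂ (g₃ x) x) (hg₃ : ∀ x ∈ uIcc a b, HasDerivAt g₃ (g₄ x) x)
    (hf₂ : IntervalIntegrable f₂ volume a b) (hg₄ : IntervalIntegrable g₄ volume a b)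
    (hg₂a : g₂ a = 0) (hg₂b : g₂ b = 0) (hg₃a : g₃ a = 0) (hg₃b : g₃ b = 0) :
    ∫ x in a..b, f x * g₄ x = ∫ x in a..b, f₂ x * g₂ x := by
  have hf₁i : IntervalIntegrable f₁ volume a b :=
    ContinuousOn.intervalIntegrable fun x hx => (hf₁ x hx).continuousAt.continuousWithinAt
  have hg₃i : IntervalIntegrable g₃ volume a b :=
    ContinuousOn.intervalIntegrable fun x hx => (hg₃ x hx).continuousAt.continuousWithinAt
  rw [integral_mul_deriv_eq_deriv_mul hf hg₃ hf₁i hg₄,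
    integral_mul_deriv_eq_deriv_mul hf₁ hg₂ hf₂ hg₃i, hg₂a, hg₂b, hg₃a, hg₃b]
  ring

theorem hasDerivAt_intervalIntegral_of_continuousOn {F F' : ℝ → ℝ → ℝ} {t₀ t₁ a b t : ℝ}
    (hab : a ≤ b) (ht : t ∈ Ioo t₀ t₁) (hF : ∀ τ ∈ Icc t₀ t₁, ContinuousOn (F τ) (Icc a b))
    (hF' : ContinuousOn (uncurry F') (Icc t₀ t₁ ×ˢ Icc a b))
    (hderiv : ∀ τ ∈ Icc t₀ t₁, ∀ x ∈ Icc a b, HasDerivAt (fun σ => F σ x) (F' τ x) τ) :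
    HasDerivAt (fun τ => ∫ x in a..b, F τ x) (∫ x in a..b, F' t x) t := by
  have hnhds : Icc t₀ t₁ ∈ 𝓝 t := Icc_mem_nhds ht.1 ht.2
  have htI : t ∈ Icc t₀ t₁ := Ioo_subset_Icc_self ht
  obtain ⟨C, hC⟩ := (isCompact_Icc.prod isCompact_Icc).exists_bound_of_continuousOn hF'
  have hIoc : ∀ x ∈ uIoc a b, x ∈ Icc a b := fun x hx =>
    Ioc_subset_Icc_self (uIoc_of_le hab ▸ hx)
  have hmeas : ∀ g : ℝ → ℝ, ContinuousOn g (Icc a b) →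
      AEStronglyMeasurable g (volume.restrict (uIoc a b)) := fun g hg => by
    rw [uIoc_of_le hab]
    exact (hg.mono Ioc_subset_Icc_self).aestronglyMeasurable measurableSet_Ioc
  refine (intervalIntegral.hasDerivAt_integral_of_dominated_loc_of_deriv_le
    (bound := fun _ => C) hnhds ?_ ((hF t htI).intervalIntegrable_of_Icc hab)
    (hmeas _ (hF'.uncurry_left t htI))
    (ae_of_all _ fun x hx τ hτ => hC (τ, x) ⟨hτ, hIoc x hx⟩) intervalIntegrable_const
    (ae_of_all _ fun x hx τ hτ => hderiv τ hτ x (hIoc x hx))).2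
  filter_upwards [hnhds] with τ hτ using hmeas _ (hF τ hτ)

theorem hasDerivAt_intervalIntegral_mul_of_continuousOn {f f' : ℝ → ℝ → ℝ} {g : ℝ → ℝ}
    {t₀ t₁ a b t : ℝ} (hab : a ≤ b) (ht : t ∈ Ioo t₀ t₁)
    (hf : ∀ τ ∈ Icc t₀ t₁, ContinuousOn (f τ) (Icc a b))
    (hf' : ContinuousOn (uncurry f') (Icc t₀ t₁ ×ˢ Icc a b)) (hg : ContinuousOn g (Icc a b))
    (hderiv : ∀ τ ∈ Icc t₀ t₁, ∀ x ∈ Icc a b, HasDerivAt (fun σ => f σ x) (f' τ x) τ) :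
    HasDerivAt (fun τ => ∫ x in a..b, f τ x * g x) (∫ x in a..b, f' t x * g x) t :=
  hasDerivAt_intervalIntegral_of_continuousOn (F' := fun τ x => f' τ x * g x) hab ht
    (fun τ hτ => (hf τ hτ).mul hg) (hf'.mul (hg.comp continuousOn_snd fun _ hp => hp.2))
    fun τ hτ x hx => (hderiv τ hτ x hx).mul_const (g x)

theorem intervalIntegral_integral_swap_of_continuousOn {f : ℝ → ℝ → ℝ} {a b c d : ℝ}
    (hab : a ≤ b) (hcd : c ≤ d) (hf : ContinuousOn (uncurry f) (Icc a b ×ˢ Icc c d)) :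
    ∫ x in c..d, ∫ τ in a..b, f τ x = ∫ τ in a..b, ∫ x in c..d, f τ x := by
  have hint : Integrable (uncurry fun x τ => f τ x)
      ((volume.restrict (Ioc c d)).prod (volume.restrict (Ioc a b))) := by
    rw [Measure.prod_restrict]
    refine ((hf.comp continuous_swap.continuousOn fun p hp => ⟨hp.2, hp.1⟩).integrableOn_compact
      (isCompact_Icc.prod isCompact_Icc)).mono_set
      (prod_mono Ioc_subset_Icc_self Ioc_subset_Icc_self)
  simp only [intervalIntegral.integral_of_le hab, intervalIntegral.integral_of_le hcd]
  exact integral_integral_swap hint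

theorem intervalIntegral_integral_eq_zero_of_slice {j : ℝ → ℝ → ℝ} {a b s : ℝ} (hs : 0 ≤ s)
    (hab : a ≤ b) (hj : ContinuousOn (uncurry j) (Icc 0 s ×ˢ Icc a b))
    (hslice : ∀ τ ∈ Ioo 0 s, ∫ x in a..b, j τ x = 0) :
    ∫ x in a..b, ∫ τ in 0..s, j τ x = 0 := by
  rw [intervalIntegral_integral_swap_of_continuousOn hs hab hj,
    intervalIntegral.integral_congr_Ioo_of_le hs hslice, intervalIntegral.integral_zero]

theorem integral_energy_flux_eq_sub {Φ ψ v v' v'' w w' q : ℝ → ℝ} {I : Set ℝ} {ρ μ a b : ℝ}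
    (hab : a ≤ b) (hv : ∀ τ ∈ Icc a b, HasDerivAt v (v' τ) τ)
    (hv' : ∀ τ ∈ Icc a b, HasDerivAt v' (v'' τ) τ) (hw : ∀ τ ∈ Icc a b, HasDerivAt w (w' τ) τ)
    (hw' : ContinuousOn w' (Icc a b)) (hq : ContinuousOn q (Icc a b))
    (hvI : MapsTo v (Icc a b) I) (hψ : ∀ y ∈ I, HasDerivWithinAt Φ (ψ y) I y)
    (heq : ∀ τ ∈ Icc a b, ρ * v'' τ = -μ * q τ - ψ (v τ)) :
    ∫ τ in a..b, μ * (w τ * w' τ - v' τ * q τ) =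
      (ρ / 2 * v' b ^ 2 + μ / 2 * w b ^ 2 + Φ (v b)) -
        (ρ / 2 * v' a ^ 2 + μ / 2 * w a ^ 2 + Φ (v a)) := by
  have hE : ∀ τ ∈ Icc a b, HasDerivWithinAt (fun σ => ρ / 2 * v' σ ^ 2 + μ / 2 * w σ ^ 2 + Φ (v σ))
      (μ * (w τ * w' τ - v' τ * q τ)) (Icc a b) τ := by
    intro τ hτ
    have hkin : HasDerivAt (fun σ => ρ / 2 * v' σ ^ 2 + μ / 2 * w σ ^ 2)
        (ρ * v' τ * v'' τ + μ * w τ * w' τ) τ := by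
      refine ((((hv' τ hτ).fun_pow 2).const_mul (ρ / 2)).fun_add
        (((hw τ hτ).fun_pow 2).const_mul (μ / 2))).congr_deriv ?_
      push_cast
      ring
    have hpot : HasDerivWithinAt (fun σ => Φ (v σ)) (ψ (v τ) * v' τ) (Icc a b) τ :=
      (hψ _ (hvI hτ)).comp τ (hv τ hτ).hasDerivWithinAt hvI
    refine (hkin.hasDerivWithinAt.fun_add hpot).congr_deriv ?_
    linear_combination v' τ * heq τ hτ
  have hwc : ContinuousOn w (Icc a b) := fun τ hτ => (hw τ hτ).continuousAt.continuousWithinAt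
  have hv'c : ContinuousOn v' (Icc a b) := fun τ hτ =>
    (hv' τ hτ).continuousAt.continuousWithinAt
  have hcont : ContinuousOn (fun τ => μ * (w τ * w' τ - v' τ * q τ)) (Icc a b) := by fun_prop
  exact integral_eq_sub_of_hasDeriv_right_of_le hab (fun τ hτ => (hE τ hτ).continuousWithinAt)
    (fun τ hτ => ((hE τ (Ioo_subset_Icc_self hτ)).hasDerivAt
      (Icc_mem_nhds hτ.1 hτ.2)).hasDerivWithinAt) (hcont.intervalIntegrable_of_Icc hab)

theorem integral_uxx_mul_utxx_sub_ut_mul_uxxxx_eq_zero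
    {u ut ux uxx uxxx uxxxx utxx : ℝ → ℝ → ℝ} {T L s : ℝ} (hL : 0 ≤ L) (hs : s ∈ Ioo 0 T)
    (hut : ∀ x ∈ Icc 0 L, ∀ t ∈ Icc 0 T, HasDerivAt (fun τ => u τ x) (ut t x) t)
    (hux : ∀ t ∈ Icc 0 T, ∀ x ∈ Icc 0 L, HasDerivAt (fun y => u t y) (ux t x) x)
    (huxx : ∀ t ∈ Icc 0 T, ∀ x ∈ Icc 0 L, HasDerivAt (fun y => ux t y) (uxx t x) x)
    (huxxx : ∀ t ∈ Icc 0 T, ∀ x ∈ Icc 0 L, HasDerivAt (fun y => uxx t y) (uxxx t x) x)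
    (huxxxx : ∀ t ∈ Icc 0 T, ∀ x ∈ Icc 0 L, HasDerivAt (fun y => uxxx t y) (uxxxx t x) x)
    (hutxx : ∀ x ∈ Icc 0 L, ∀ t ∈ Icc 0 T, HasDerivAt (fun τ => uxx τ x) (utxx t x) t)
    (hcut : ContinuousOn (uncurry ut) (Icc 0 T ×ˢ Icc 0 L))
    (hcuxx : ContinuousOn (uncurry uxx) (Icc 0 T ×ˢ Icc 0 L))
    (hcuxxxx : ContinuousOn (uncurry uxxxx) (Icc 0 T ×ˢ Icc 0 L))
    (hcutxx : ContinuousOn (uncurry utxx) (Icc 0 T ×ˢ Icc 0 L))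
    (hBC : ∀ t ∈ Icc 0 T, uxx t 0 = 0 ∧ uxx t L = 0 ∧ uxxx t 0 = 0 ∧ uxxx t L = 0) :
    ∫ x in 0..L, (uxx s x * utxx s x - ut s x * uxxxx s x) = 0 := by
  have hsI : s ∈ Icc 0 T := Ioo_subset_Icc_self hs
  have hIcc : uIcc 0 L = Icc 0 L := uIcc_of_le hL
  have hu : ∀ τ ∈ Icc 0 T, ContinuousOn (u τ) (Icc 0 L) := fun τ hτ x hx =>
    (hux τ hτ x hx).continuousAt.continuousWithinAt
  have hparts : ∀ τ ∈ Icc 0 T,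
      ∫ x in 0..L, u τ x * uxxxx s x = ∫ x in 0..L, uxx τ x * uxx s x := fun τ hτ => by
    obtain ⟨h₁, h₂, h₃, h₄⟩ := hBC s hsI
    exact integral_mul_eq_integral_mul_of_free_ends (hIcc ▸ hux τ hτ) (hIcc ▸ huxx τ hτ)
      (hIcc ▸ huxxx s hsI) (hIcc ▸ huxxxx s hsI)
      ((hcuxx.uncurry_left τ hτ).intervalIntegrable_of_Icc hL)
      ((hcuxxxx.uncurry_left s hsI).intervalIntegrable_of_Icc hL) h₁ h₂ h₃ h₄
  have hlhs := hasDerivAt_intervalIntegral_mul_of_continuousOn hL hs hu hcut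
    (hcuxxxx.uncurry_left s hsI) fun τ hτ x hx => hut x hx τ hτ
  have hrhs := hasDerivAt_intervalIntegral_mul_of_continuousOn hL hs
    (fun τ hτ => hcuxx.uncurry_left τ hτ) hcutxx (hcuxx.uncurry_left s hsI)
    fun τ hτ x hx => hutxx x hx τ hτ
  have hswap := hlhs.unique (hrhs.congr_of_eventuallyEq
    (eventually_of_mem (Icc_mem_nhds hs.1 hs.2) hparts))
  rw [intervalIntegral.integral_sub, hswap]
  · simp only [mul_comm, sub_self]
  · exact ((hcuxx.uncurry_left s hsI).mul (hcutxx.uncurry_left s hsI)).intervalIntegrable_of_Icc hL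
  · exact ((hcut.uncurry_left s hsI).mul (hcuxxxx.uncurry_left s hsI)).intervalIntegrable_of_Icc hL

theorem integral_energy_eq_zero {Φ ψ : ℝ → ℝ} {u ut utt ux uxx uxxx uxxxx utxx : ℝ → ℝ → ℝ}
    {T L ρ μ s : ℝ} (hL : 0 < L) (hs : s ∈ Icc 0 T)
    (hψ : ∀ y ∈ Icc (-1:ℝ) 1, HasDerivWithinAt Φ (ψ y) (Icc (-1:ℝ) 1) y)
    (hrange : ∀ t ∈ Icc 0 T, ∀ x ∈ Icc 0 L, |u t x| ≤ 1)
    (hut : ∀ x ∈ Icc 0 L, ∀ t ∈ Icc 0 T, HasDerivAt (fun τ => u τ x) (ut t x) t)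
    (hutt : ∀ x ∈ Icc 0 L, ∀ t ∈ Icc 0 T, HasDerivAt (fun τ => ut τ x) (utt t x) t)
    (hux : ∀ t ∈ Icc 0 T, ∀ x ∈ Icc 0 L, HasDerivAt (fun y => u t y) (ux t x) x)
    (huxx : ∀ t ∈ Icc 0 T, ∀ x ∈ Icc 0 L, HasDerivAt (fun y => ux t y) (uxx t x) x)
    (huxxx : ∀ t ∈ Icc 0 T, ∀ x ∈ Icc 0 L, HasDerivAt (fun y => uxx t y) (uxxx t x) x)
    (huxxxx : ∀ t ∈ Icc 0 T, ∀ x ∈ Icc 0 L, HasDerivAt (fun y => uxxx t y) (uxxxx t x) x)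
    (hutxx : ∀ x ∈ Icc 0 L, ∀ t ∈ Icc 0 T, HasDerivAt (fun τ => uxx τ x) (utxx t x) t)
    (hcut : ContinuousOn (uncurry ut) (Icc 0 T ×ˢ Icc 0 L))
    (hcuxx : ContinuousOn (uncurry uxx) (Icc 0 T ×ˢ Icc 0 L))
    (hcuxxxx : ContinuousOn (uncurry uxxxx) (Icc 0 T ×ˢ Icc 0 L))
    (hcutxx : ContinuousOn (uncurry utxx) (Icc 0 T ×ˢ Icc 0 L))
    (hPDE : ∀ t ∈ Icc 0 T, ∀ x ∈ Ioo 0 L, ρ * utt t x = -μ * uxxxx t x - ψ (u t x))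
    (hBC : ∀ t ∈ Icc 0 T, uxx t 0 = 0 ∧ uxx t L = 0 ∧ uxxx t 0 = 0 ∧ uxxx t L = 0)
    (hu0 : ∀ x ∈ Icc 0 L, u 0 x = 0) (hut0 : ∀ x ∈ Icc 0 L, ut 0 x = 0) :
    ∫ x in 0..L, (ρ / 2 * ut s x ^ 2 + (μ / 2 * uxx s x ^ 2 + (Φ (u s x) - Φ 0))) = 0 := by
  have hsT : Icc 0 s ⊆ Icc 0 T := Icc_subset_Icc_right hs.2
  have h0 : (0 : ℝ) ∈ Icc 0 T := ⟨le_rfl, hs.1.trans hs.2⟩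
  have huxx0 : EqOn (uxx 0) 0 (Icc 0 L) := eqOn_zero_of_hasDerivAt_of_eqOn_zero hL
    (huxx 0 h0) (eqOn_zero_of_hasDerivAt_of_eqOn_zero hL (hux 0 h0) hu0)
  have henergy : EqOn (fun x => ρ / 2 * ut s x ^ 2 + (μ / 2 * uxx s x ^ 2 + (Φ (u s x) - Φ 0)))
      (fun x => ∫ τ in 0..s, μ * (uxx τ x * utxx τ x - ut τ x * uxxxx τ x)) (Ioo 0 L) := by
    intro x hx
    have hxI := Ioo_subset_Icc_self hx
    dsimp only
    rw [integral_energy_flux_eq_sub hs.1 (fun τ hτ => hut x hxI τ (hsT hτ))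
      (fun τ hτ => hutt x hxI τ (hsT hτ)) (fun τ hτ => hutxx x hxI τ (hsT hτ))
      ((hcutxx.uncurry_right x hxI).mono hsT) ((hcuxxxx.uncurry_right x hxI).mono hsT)
      (fun τ hτ => abs_le.mp (hrange τ (hsT hτ) x hxI)) hψ (fun τ hτ => hPDE τ (hsT hτ) x hx),
      hu0 x hxI, hut0 x hxI, huxx0 hxI]
    simp only [Pi.zero_apply]
    ring
  rw [intervalIntegral.integral_congr_Ioo_of_le hL.le henergy]
  refine intervalIntegral_integral_eq_zero_of_slice hs.1 hL.le ?_ fun τ hτ => ?_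
  · exact (continuousOn_const.mul ((hcuxx.mul hcutxx).sub (hcut.mul hcuxxxx))).mono
      (prod_mono hsT subset_rfl)
  · rw [intervalIntegral.integral_const_mul,
      integral_uxx_mul_utxx_sub_ut_mul_uxxxx_eq_zero hL.le ⟨hτ.1, hτ.2.trans_le hs.2⟩
        hut hux huxx huxxx huxxxx hutxx hcut hcuxx hcuxxxx hcutxx hBC, mul_zero]

theorem triviality_zero_data
    (L ρ μ T κ : ℝ) (hL : 0 < L) (hρ : 0 < ρ) (hμ : 0 < μ)
    (Φ : ℝ → ℝ) (hΦ : AdhesivePotential Φ κ)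
    -- ψ is the derivative of the restriction of Φ to [-1,1], continuous up to ±1
    (ψ : ℝ → ℝ)
    (hψ : ∀ s ∈ Icc (-1:ℝ) 1, HasDerivWithinAt Φ (ψ s) (Icc (-1:ℝ) 1) s)
    (u ut utt ux uxx uxxx uxxxx utxx : ℝ → ℝ → ℝ)
    -- attached regime: |u| ≤ 1
    (hrange : ∀ t ∈ Icc 0 T, ∀ x ∈ Icc 0 L, |u t x| ≤ 1)
    -- time derivatives
    (hut : ∀ x ∈ Icc 0 L, ∀ t ∈ Icc 0 T, HasDerivAt (fun τ => u τ x) (ut t x) t)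
    (hutt : ∀ x ∈ Icc 0 L, ∀ t ∈ Icc 0 T, HasDerivAt (fun τ => ut τ x) (utt t x) t)
    -- space derivatives
    (hux : ∀ t ∈ Icc 0 T, ∀ x ∈ Icc 0 L, HasDerivAt (fun y => u t y) (ux t x) x)
    (huxx : ∀ t ∈ Icc 0 T, ∀ x ∈ Icc 0 L, HasDerivAt (fun y => ux t y) (uxx t x) x)
    (huxxx : ∀ t ∈ Icc 0 T, ∀ x ∈ Icc 0 L, HasDerivAt (fun y => uxx t y) (uxxx t x) x)
    (huxxxx : ∀ t ∈ Icc 0 T, ∀ x ∈ Icc 0 L, HasDerivAt (fun y => uxxx t y) (uxxxx t x) x)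
    -- mixed derivative ∂ₜ∂ₓ²u
    (hutxx : ∀ x ∈ Icc 0 L, ∀ t ∈ Icc 0 T, HasDerivAt (fun τ => uxx τ x) (utxx t x) t)
    -- continuity of the derivatives on [0,T] × [0,L]
    (hcont : ∀ v ∈ ({ut, utt, ux, uxx, uxxx, uxxxx, utxx} : Set (ℝ → ℝ → ℝ)),
      ContinuousOn (fun p : ℝ × ℝ => v p.1 p.2) (Icc 0 T ×ˢ Icc 0 L))
    -- the PDE ρ ∂ₜ²u = -μ ∂ₓ⁴u - Φ'(u) on [0,T] × (0,L)
    (hPDE : ∀ t ∈ Icc 0 T, ∀ x ∈ Ioo 0 L,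
      ρ * utt t x = -μ * uxxxx t x - ψ (u t x))
    -- free-end boundary conditions
    (hBC : ∀ t ∈ Icc 0 T,
      uxx t 0 = 0 ∧ uxx t L = 0 ∧ uxxx t 0 = 0 ∧ uxxx t L = 0)
    -- zero initial conditions
    (hu0 : ∀ x ∈ Icc 0 L, u 0 x = 0) (hut0 : ∀ x ∈ Icc 0 L, ut 0 x = 0) :
    ∀ t ∈ Icc 0 T, ∀ x ∈ Icc 0 L, u t x = 0 := by
  have hcut := hcont ut (by simp)
  have hcuxx := hcont uxx (by simp)
  have hvel : ∀ s ∈ Icc 0 T, ∀ x ∈ Icc 0 L, ut s x = 0 := fun s hs => by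
    refine eqOn_zero_of_integral_mul_sq_add_eq_zero hL (by positivity) (hcut.uncurry_left s hs)
      ?_ (fun x hx => ?_) (integral_energy_eq_zero hL hs hψ hrange hut hutt hux huxx huxxx
        huxxxx hutxx hcut hcuxx (hcont uxxxx (by simp)) (hcont utxx (by simp)) hPDE hBC hu0 hut0)
    · exact continuousOn_const.mul ((hcuxx.uncurry_left s hs).pow 2) |>.add
        ((hΦ.continuous.comp_continuousOn fun x hx =>
          (hux s hs x hx).continuousAt.continuousWithinAt).sub continuousOn_const)
    · have := hΦ.apply_zero_le (abs_le.mp (hrange s hs x hx))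
      positivity
  intro t ht x hx
  have hconst := constant_of_has_deriv_right_zero
    (fun τ hτ => (hut x hx τ (Icc_subset_Icc_right ht.2 hτ)).continuousAt.continuousWithinAt)
    (fun τ hτ => by
      have hτT : τ ∈ Icc 0 T := ⟨hτ.1, hτ.2.le.trans ht.2⟩
      simpa only [hvel τ hτT x hx] using (hut x hx τ hτT).hasDerivWithinAt)
    t (right_mem_Icc.2 ht.1)
  rwa [hu0 x hx] at hconst
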